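/- Let d_1, d_2, q be positive integers and let I(q;s) = {k_1 < ... < k_J} be a finite set of integers. For each j let f_{k_j} be a trigonometric polynomial of degree at most d_1 and let b_{k_j} be integers defined by k_j = b_{k_j} q + s. Then T_2 := (1/(q d_2)) ∑_{m=1}^{q d_2} ∫_{m−1}^{m} |∑_{j=1}^J (f_{k_j}(u/(q d_2)) − f_{k_j}((m−1)/(q d_2))) e(b_{k_j} u)| du ≤ (2π d_1/(q d_2)) ∑_{j=1}^J ‖f_{k_j}‖_{L^1([0,1])}. -/

import Mathlib

open MeasureTheory

/-- `e z = e^{2πiz}`. -/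
noncomputable def e (x : ℝ) : ℂ := Complex.exp (2 * Real.pi * Complex.I * x)

/-!
The phases `e(b_j u)` have modulus one, so the triangle inequality reduces the bound to a single
trigonometric polynomial `f` of degree `d`. With `Q = q d₂`, the fundamental theorem of calculus
bounds `|f(u/Q) - f((m-1)/Q)|` for `u ∈ [m-1, m]` by `∫_{(m-1)/Q}^{m/Q} |f'|`, and these slices add up
to `‖f'‖_{L¹}`.

Bernstein's inequality `‖f'‖_{L¹} ≤ 2πd ‖f‖_{L¹}` follows from M. Riesz's interpolation formula
`f'(t) = ∑_{k<2d} c_k f(t + θ_k)`, `θ_k = (2k+1)/(4d)`, and the translation invariance of the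
`L¹` norm on the circle. The coefficients `c_k = (-1)^k π / (d (1 - cos 2πθ_k))` alternate in sign
like `e(dθ_k)`, so the formula applied to `e(d·)` gives `∑ |c_k| = 2πd`.
-/

open Finset Complex Real

lemma e_eq_fourierChar (x : ℝ) : e x = Real.fourierChar x := by
  rw [Real.fourierChar_apply, e]; push_cast; ring_nf

lemma e_add (x y : ℝ) : e (x + y) = e x * e y := by
  simp only [e_eq_fourierChar, AddChar.map_add_eq_mul, Circle.coe_mul]

lemma e_neg (x : ℝ) : e (-x) = (e x)⁻¹ := by
  simp only [e_eq_fourierChar, AddChar.map_neg_eq_inv, Circle.coe_inv]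

lemma e_nat_mul (k : ℕ) (x : ℝ) : e (k * x) = e x ^ k := by
  simp only [e_eq_fourierChar, ← nsmul_eq_mul, AddChar.map_nsmul_eq_pow, Circle.coe_pow]

lemma e_zero : e 0 = 1 := by simp [e]

lemma e_intCast (n : ℤ) : e n = 1 := by
  rw [e, show 2 * (π : ℂ) * I * (n : ℝ) = n * (2 * π * I) by push_cast; ring]
  exact exp_int_mul_two_pi_mul_I n

lemma e_eq_one_iff (x : ℝ) : e x = 1 ↔ ∃ n : ℤ, x = n := by
  refine ⟨fun h => ?_, by rintro ⟨n, rfl⟩; exact e_intCast n⟩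
  obtain ⟨n, hn⟩ := Complex.exp_eq_one_iff.mp h
  have hx : (x : ℂ) * (2 * π * I) = n * (2 * π * I) := by linear_combination hn
  exact ⟨n, by exact_mod_cast mul_right_cancel₀ two_pi_I_ne_zero hx⟩

lemma e_one_fourth : e (1 / 4) = I := by
  rw [e, show 2 * (π : ℂ) * I * ((1 / 4 : ℝ) : ℂ) = (π / 2 : ℝ) * I by push_cast; ring,
    exp_mul_I, ← ofReal_cos, ← ofReal_sin, Real.cos_pi_div_two, Real.sin_pi_div_two]
  simp

lemma norm_e (x : ℝ) : ‖e x‖ = 1 := by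
  rw [e_eq_fourierChar, Circle.norm_coe]

@[fun_prop]
lemma continuous_e : Continuous e := by
  rw [funext e_eq_fourierChar]; fun_prop

lemma e_add_e_neg (x : ℝ) : e x + e (-x) = 2 * Real.cos (2 * π * x) := by
  rw [ofReal_cos, two_cos, e, e]; push_cast; ring_nf

lemma hasDerivAt_e_mul (a t : ℝ) :
    HasDerivAt (fun t => e (a * t)) (2 * π * I * a * e (a * t)) t := by
  have := ((hasDerivAt_id (t : ℂ)).const_mul (2 * π * I * a)).cexp.comp_ofReal
  simpa [e, mul_comm, mul_assoc, mul_left_comm] using this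

lemma sq_sub_one_mul_sum_range (w c : ℂ) (M : ℕ) :
    (w - 1) ^ 2 * ∑ j ∈ range M, (j + c) * w ^ j
      = (M + c - 1) * w ^ (M + 1) - (M + c) * w ^ M - (c - 1) * w + c := by
  induction M with
  | zero => simp
  | succ M ih => rw [sum_range_succ, mul_add, ih]; push_cast; ring

noncomputable def rieszNode (d k : ℕ) : ℝ := (2 * k + 1) / (4 * d)

-- The discrete Fourier inversion of `n ↦ 2πin` on the residues `1 - d, …, d` modulo `2d`.
noncomputable def rieszCoeff (d : ℕ) (θ : ℝ) : ℂ :=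
  π * I / d * ∑ n ∈ Icc (1 - d : ℤ) d, n * e (-(n * θ))

section Riesz

variable {d : ℕ}

lemma e_mul_rieszNode (hd : 0 < d) (k : ℕ) : e (d * rieszNode d k) = I * (-1) ^ k := by
  have hd' : (d : ℝ) ≠ 0 := by positivity
  rw [show d * rieszNode d k = (2 * k + 1 : ℕ) * (1 / 4 : ℝ) by
      rw [rieszNode]; push_cast; field_simp,
    e_nat_mul, e_one_fourth, pow_succ, pow_mul, I_sq, mul_comm]

lemma e_two_mul_rieszNode (hd : 0 < d) (k : ℕ) : e (2 * d * rieszNode d k) = -1 := by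
  rw [mul_assoc, ← Nat.cast_ofNat, e_nat_mul, e_mul_rieszNode hd, mul_pow, I_sq, ← pow_mul,
    mul_comm k, pow_mul]
  norm_num

lemma sum_e_mul_rieszNode_eq_zero {r : ℤ} (hr : ¬ (2 * d : ℤ) ∣ r) :
    ∑ k ∈ range (2 * d), e (r * rieszNode d k) = 0 := by
  obtain rfl | hd := d.eq_zero_or_pos
  · simp
  have hd' : (d : ℝ) ≠ 0 := by positivity
  set z := e (r / (2 * d))
  have hterm : ∀ k : ℕ, e (r * rieszNode d k) = e (r / (4 * d)) * z ^ k := fun k => by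
    rw [← e_nat_mul, ← e_add, rieszNode]; congr 1; field_simp; ring
  have hz : z ≠ 1 := by
    rintro hz
    obtain ⟨n, hn⟩ := (e_eq_one_iff _).mp hz
    exact hr ⟨n, by exact_mod_cast (div_eq_iff (by positivity)).mp hn |>.trans (mul_comm _ _)⟩
  have hz2d : z ^ (2 * d) = 1 := by
    rw [← e_nat_mul, show ((2 * d : ℕ) : ℝ) * (r / (2 * d)) = r by push_cast; field_simp]
    exact e_intCast r
  simp only [hterm, ← mul_sum, geom_sum_eq hz, hz2d, sub_self, zero_div, mul_zero]

lemma sum_Icc_one_sub_eq_sum_range {M : Type*} [AddCommMonoid M] (F : ℤ → M) :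
    ∑ n ∈ Icc (1 - d : ℤ) d, F n = ∑ j ∈ range (2 * d), F (1 - d + j) := by
  rw [Int.Icc_eq_finset_map, sum_map, show ((d : ℤ) + 1 - (1 - d)).toNat = 2 * d by omega]
  rfl

lemma sq_sub_one_mul_sum_range_of_pow_eq_neg_one {w : ℂ} (hw : w ^ (2 * d) = -1) :
    (w - 1) ^ 2 * ∑ j ∈ range (2 * d), (j + (1 - d : ℂ)) * w ^ j = 2 := by
  rw [sq_sub_one_mul_sum_range, pow_succ, hw]; push_cast; ring

lemma rieszCoeff_mul_two_cos_sub_two {θ : ℝ} (hθ : e (2 * d * θ) = -1) :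
    rieszCoeff d θ * (2 * Real.cos (2 * π * θ) - 2) = 2 * π * I / d * e (d * θ) := by
  set w := e (-θ)
  have hw : w ^ (2 * d) = -1 := by
    rw [← e_nat_mul, show ((2 * d : ℕ) : ℝ) * -θ = -(2 * d * θ) by push_cast; ring, e_neg, hθ]
    norm_num
  have hsum : ∑ n ∈ Icc (1 - d : ℤ) d, n * e (-(n * θ))
      = e ((d - 1) * θ) * ∑ j ∈ range (2 * d), (j + (1 - d : ℂ)) * w ^ j := by
    rw [sum_Icc_one_sub_eq_sum_range, mul_sum]
    refine sum_congr rfl fun j _ => ?_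
    rw [← e_nat_mul, mul_left_comm, ← e_add]; push_cast; ring_nf
  have hcos : 2 * (Real.cos (2 * π * θ) : ℂ) - 2 = (w - 1) ^ 2 * e θ := by
    have hwθ : w * e θ = 1 := by rw [← e_add, neg_add_cancel, e_zero]
    rw [← e_add_e_neg]; linear_combination (-w + 2) * hwθ
  have hdθ : e ((d - 1) * θ) * e θ = e (d * θ) := by rw [← e_add]; ring_nf
  rw [rieszCoeff, hsum, hcos]
  linear_combination
    (π * I / d * e ((d - 1) * θ) * e θ) * sq_sub_one_mul_sum_range_of_pow_eq_neg_one hw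
      + 2 * π * I / d * hdθ

lemma sum_rieszCoeff_mul_e_of_mem {m : ℤ} (hm : m ∈ Icc (1 - d : ℤ) d) :
    ∑ k ∈ range (2 * d), rieszCoeff d (rieszNode d k) * e (m * rieszNode d k) = 2 * π * I * m := by
  rw [mem_Icc] at hm
  have hd : (d : ℂ) ≠ 0 := by norm_cast; omega
  have horth : ∀ n ∈ Icc (1 - d : ℤ) d,
      ∑ k ∈ range (2 * d), e ((m - n : ℤ) * rieszNode d k) = if n = m then (2 * d : ℂ) else 0 := by
    intro n hn
    rw [mem_Icc] at hn
    split_ifs with hnm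
    · simp [hnm, e_zero]
    refine sum_e_mul_rieszNode_eq_zero fun hdvd => hnm ?_
    have := Int.eq_zero_of_abs_lt_dvd hdvd (by rw [abs_lt]; omega)
    omega
  calc ∑ k ∈ range (2 * d), rieszCoeff d (rieszNode d k) * e (m * rieszNode d k)
      = π * I / d * ∑ n ∈ Icc (1 - d : ℤ) d,
          n * ∑ k ∈ range (2 * d), e ((m - n : ℤ) * rieszNode d k) := by
        simp only [rieszCoeff, mul_sum, sum_mul]
        rw [sum_comm]
        refine sum_congr rfl fun n _ => sum_congr rfl fun k _ => ?_
        rw [mul_assoc, mul_assoc, ← e_add]; push_cast; ring_nf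
    _ = 2 * π * I * m := by
        rw [sum_congr rfl fun n hn => congrArg _ (horth n hn)]
        simp only [mul_ite, mul_zero, sum_ite_eq', mem_Icc, hm, and_self, if_true]
        field_simp

lemma sum_rieszCoeff_mul_e {m : ℤ} (hm₁ : -d ≤ m) (hm₂ : m ≤ d) :
    ∑ k ∈ range (2 * d), rieszCoeff d (rieszNode d k) * e (m * rieszNode d k) = 2 * π * I * m := by
  obtain rfl | hd := d.eq_zero_or_pos
  · obtain rfl : m = 0 := by omega
    simp
  obtain rfl | hm₁ := hm₁.eq_or_lt
  -- `-d` is not among the frequencies `1 - d, …, d` of `rieszCoeff`, but `e(-dθ_k) = -e(dθ_k)`.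
  · have hneg : ∀ k, e (((-d : ℤ) : ℝ) * rieszNode d k) = -e (((d : ℤ) : ℝ) * rieszNode d k) :=
      fun k => by
        have hsq : ((-1 : ℂ) ^ k) ^ 2 = 1 := by rw [← pow_mul, pow_mul']; norm_num
        rw [Int.cast_neg, Int.cast_natCast, neg_mul, e_neg, e_mul_rieszNode hd]
        refine inv_eq_of_mul_eq_one_right ?_
        linear_combination (-I ^ 2) * hsq - I_sq
    simp only [hneg, mul_neg, sum_neg_distrib,
      sum_rieszCoeff_mul_e_of_mem (m := d) (mem_Icc.mpr ⟨by omega, le_rfl⟩)]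
    push_cast; ring
  · exact sum_rieszCoeff_mul_e_of_mem (mem_Icc.mpr ⟨by omega, hm₂⟩)

lemma neg_one_pow_mul_rieszCoeff_rieszNode (hd : 0 < d) (k : ℕ) :
    (-1) ^ k * rieszCoeff d (rieszNode d k)
      = ((π / (d * (1 - Real.cos (2 * π * rieszNode d k))) : ℝ) : ℂ) := by
  set c := rieszCoeff d (rieszNode d k)
  set y := Real.cos (2 * π * rieszNode d k)
  have hd' : (d : ℂ) ≠ 0 := by exact_mod_cast hd.ne'
  have hsq : ((-1 : ℂ) ^ k) ^ 2 = 1 := by rw [← pow_mul, pow_mul']; norm_num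
  have h : c * (2 * y - 2) * d = -2 * π * (-1) ^ k := by
    rw [rieszCoeff_mul_two_cos_sub_two (e_two_mul_rieszNode hd k), e_mul_rieszNode hd]
    field_simp
    exact I_sq
  have hy : (d * (1 - y) : ℂ) ≠ 0 := by
    rintro h0
    have : (-2 * π * (-1) ^ k : ℂ) = 0 := by rw [← h]; linear_combination (-2 * c) * h0
    simp [pi_ne_zero] at this
  rw [ofReal_div, ofReal_mul, ofReal_sub, ofReal_one, ofReal_natCast, eq_div_iff hy]
  linear_combination (-(-1) ^ k / 2 : ℂ) * h + π * hsq

lemma norm_rieszCoeff_rieszNode (hd : 0 < d) (k : ℕ) :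
    (‖rieszCoeff d (rieszNode d k)‖ : ℂ) = (-1) ^ k * rieszCoeff d (rieszNode d k) := by
  have hnonneg : 0 ≤ π / (d * (1 - Real.cos (2 * π * rieszNode d k))) :=
    div_nonneg pi_pos.le (mul_nonneg d.cast_nonneg (sub_nonneg.mpr (Real.cos_le_one _)))
  calc (‖rieszCoeff d (rieszNode d k)‖ : ℂ) = ‖(-1) ^ k * rieszCoeff d (rieszNode d k)‖ := by simp
    _ = _ := by
      rw [neg_one_pow_mul_rieszCoeff_rieszNode hd, norm_real, Real.norm_of_nonneg hnonneg]

lemma sum_norm_rieszCoeff_rieszNode (d : ℕ) :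
    ∑ k ∈ range (2 * d), ‖rieszCoeff d (rieszNode d k)‖ = 2 * π * d := by
  obtain rfl | hd := d.eq_zero_or_pos
  · simp
  have h := sum_rieszCoeff_mul_e (m := d) (by omega) le_rfl
  simp only [Int.cast_natCast, e_mul_rieszNode hd] at h
  apply ofReal_injective
  apply mul_left_cancel₀ I_ne_zero
  push_cast
  rw [sum_congr rfl fun k _ => norm_rieszCoeff_rieszNode hd k, mul_sum,
    show I * (2 * π * d) = 2 * π * I * d by ring, ← h]
  exact sum_congr rfl fun k _ => by ring

end Riesz

noncomputable def trigPoly (d : ℕ) (c : ℤ → ℂ) (t : ℝ) : ℂ :=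
  ∑ n ∈ Icc (-d : ℤ) d, c n * e (n * t)

section TrigPoly

variable (d : ℕ) (c : ℤ → ℂ)

lemma hasDerivAt_trigPoly (t : ℝ) :
    HasDerivAt (trigPoly d c) (trigPoly d (fun n => 2 * π * I * n * c n) t) t := by
  refine (HasDerivAt.fun_sum fun (n : ℤ) _ => (hasDerivAt_e_mul n t).const_mul (c n)).congr_deriv ?_
  exact sum_congr rfl fun n _ => by push_cast; ring

lemma deriv_trigPoly : deriv (trigPoly d c) = trigPoly d (fun n => 2 * π * I * n * c n) :=
  funext fun t => (hasDerivAt_trigPoly d c t).deriv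

lemma differentiable_trigPoly : Differentiable ℝ (trigPoly d c) :=
  fun t => (hasDerivAt_trigPoly d c t).differentiableAt

@[fun_prop]
lemma continuous_trigPoly : Continuous (trigPoly d c) :=
  (differentiable_trigPoly d c).continuous

lemma periodic_trigPoly : Function.Periodic (trigPoly d c) 1 := fun t => by
  refine sum_congr rfl fun n _ => ?_
  rw [mul_add, mul_one, e_add, e_intCast, mul_one]

lemma deriv_trigPoly_eq_sum_rieszCoeff (t : ℝ) :
    deriv (trigPoly d c) t
      = ∑ k ∈ range (2 * d), rieszCoeff d (rieszNode d k) * trigPoly d c (t + rieszNode d k) := by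
  simp only [deriv_trigPoly, trigPoly, mul_sum]
  rw [sum_comm]
  refine sum_congr rfl fun n hn => ?_
  rw [mem_Icc] at hn
  simp only [mul_add, e_add]
  rw [← sum_rieszCoeff_mul_e hn.1 hn.2, sum_mul, sum_mul]
  exact sum_congr rfl fun k _ => by ring

theorem integral_norm_deriv_trigPoly_le :
    ∫ t in (0 : ℝ)..1, ‖deriv (trigPoly d c) t‖
      ≤ 2 * π * d * ∫ t in (0 : ℝ)..1, ‖trigPoly d c t‖ := by
  set F := trigPoly d c
  have htranslate (τ : ℝ) : ∫ t in (0 : ℝ)..1, ‖F (t + τ)‖ = ∫ t in (0 : ℝ)..1, ‖F t‖ := by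
    rw [intervalIntegral.integral_comp_add_right (fun t => ‖F t‖), zero_add, add_comm]
    simpa using ((periodic_trigPoly d c).comp norm).intervalIntegral_add_eq τ 0
  set ρ := fun k => rieszCoeff d (rieszNode d k)
  calc ∫ t in (0 : ℝ)..1, ‖deriv F t‖
      = ∫ t in (0 : ℝ)..1, ‖∑ k ∈ range (2 * d), ρ k * F (t + rieszNode d k)‖ := by
        simp_rw [F, ρ, deriv_trigPoly_eq_sum_rieszCoeff]
    _ ≤ ∫ t in (0 : ℝ)..1, ∑ k ∈ range (2 * d), ‖ρ k‖ * ‖F (t + rieszNode d k)‖ := by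
        refine intervalIntegral.integral_mono_on zero_le_one
          ((by fun_prop : Continuous _).intervalIntegrable _ _)
          ((by fun_prop : Continuous _).intervalIntegrable _ _) fun t _ => ?_
        exact (norm_sum_le _ _).trans_eq (by simp_rw [norm_mul])
    _ = ∑ k ∈ range (2 * d), ‖ρ k‖ * ∫ t in (0 : ℝ)..1, ‖F (t + rieszNode d k)‖ := by
        rw [intervalIntegral.integral_finsetSum fun k _ =>
          (by fun_prop : Continuous _).intervalIntegrable _ _]
        simp_rw [intervalIntegral.integral_const_mul]
    _ = 2 * π * d * ∫ t in (0 : ℝ)..1, ‖F t‖ := by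
        simp_rw [ρ, htranslate, ← sum_mul, sum_norm_rieszCoeff_rieszNode]

end TrigPoly

section Slices

variable {E : Type*} [NormedAddCommGroup E] [NormedSpace ℝ E] [CompleteSpace E] {f : ℝ → E}

lemma norm_sub_le_integral_norm_deriv (hf : Differentiable ℝ f) (hf' : Continuous (deriv f))
    {a u b : ℝ} (hau : a ≤ u) (hub : u ≤ b) : ‖f u - f a‖ ≤ ∫ t in a..b, ‖deriv f t‖ := by
  rw [← intervalIntegral.integral_eq_sub_of_hasDerivAt (fun x _ => (hf x).hasDerivAt)
    (hf'.intervalIntegrable _ _)]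
  calc _ ≤ ∫ t in a..u, ‖deriv f t‖ := intervalIntegral.norm_integral_le_integral_norm hau
    _ ≤ _ := intervalIntegral.integral_mono_interval le_rfl hau hub
        (ae_of_all _ fun _ => norm_nonneg _) (hf'.norm.intervalIntegrable _ _)

lemma sum_integral_norm_sub_le_integral_norm_deriv (hf : Differentiable ℝ f)
    (hf' : Continuous (deriv f)) (Q : ℕ) :
    ∑ m ∈ Icc 1 Q, ∫ u in ((m : ℝ) - 1)..m, ‖f (u / Q) - f (((m : ℝ) - 1) / Q)‖
      ≤ ∫ t in (0 : ℝ)..1, ‖deriv f t‖ := by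
  obtain rfl | hQ := Q.eq_zero_or_pos
  · rw [Icc_eq_empty (by omega), sum_empty]
    exact intervalIntegral.integral_nonneg zero_le_one fun _ _ => norm_nonneg _
  have hfc : Continuous f := hf.continuous
  set a : ℕ → ℝ := fun m => ((m : ℝ) - 1) / Q
  have hslice : ∀ m ∈ Icc 1 Q, ∫ u in ((m : ℝ) - 1)..m, ‖f (u / Q) - f (a m)‖
      ≤ ∫ t in a m..a (m + 1), ‖deriv f t‖ := by
    intro m _
    have hbound : ∀ u ∈ Set.Icc ((m : ℝ) - 1) m,
        ‖f (u / Q) - f (a m)‖ ≤ ∫ t in a m..a (m + 1), ‖deriv f t‖ := fun u hu =>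
      norm_sub_le_integral_norm_deriv hf hf' (by simp only [a]; gcongr; exact hu.1)
        (by simp only [a, Nat.cast_add, Nat.cast_one, add_sub_cancel_right]; gcongr; exact hu.2)
    calc _ ≤ ∫ _ in ((m : ℝ) - 1)..m, ∫ t in a m..a (m + 1), ‖deriv f t‖ :=
          intervalIntegral.integral_mono_on (by linarith)
            ((by fun_prop : Continuous fun u : ℝ => ‖f (u / Q) - f (a m)‖).intervalIntegrable _ _)
            intervalIntegrable_const hbound
      _ = _ := by simp
  calc _ ≤ ∑ m ∈ Ico 1 (Q + 1), ∫ t in a m..a (m + 1), ‖deriv f t‖ := by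
        rw [Ico_add_one_right_eq_Icc]; exact sum_le_sum hslice
    _ = ∫ t in a 1..a (Q + 1), ‖deriv f t‖ :=
        intervalIntegral.sum_integral_adjacent_intervals_Ico (by omega)
          fun _ _ => hf'.norm.intervalIntegrable _ _
    _ = _ := by simp [a, hQ.ne']

end Slices

lemma integral_norm_sum_mul_e_le {ι : Type*} (s : Finset ι) {g : ι → ℝ → ℂ}
    (hg : ∀ i, Continuous (g i)) (β : ι → ℝ) {a b : ℝ} (hab : a ≤ b) :
    ∫ u in a..b, ‖∑ i ∈ s, g i u * e (β i * u)‖ ≤ ∑ i ∈ s, ∫ u in a..b, ‖g i u‖ := by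
  rw [← intervalIntegral.integral_finsetSum fun i _ => (hg i).norm.intervalIntegrable _ _]
  refine intervalIntegral.integral_mono_on hab ?_ ?_ fun u _ => ?_
  · exact (continuous_finsetSum _ fun i _ => (hg i).mul (by fun_prop)).norm.intervalIntegrable _ _
  · exact (continuous_finsetSum _ fun i _ => (hg i).norm).intervalIntegrable _ _
  · exact (norm_sum_le _ _).trans_eq (by simp_rw [norm_mul, norm_e, mul_one])

theorem error_term_bound_general
    (d1 d2 q : ℕ)
    (J : ℕ)
    (b : Fin J → ℤ)
    (a : Fin J → ℤ → ℂ) (f : Fin J → ℝ → ℂ)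
    (hf : ∀ j, ∀ t : ℝ,
      f j t = ∑ n ∈ Finset.Icc (-(d1 : ℤ)) (d1 : ℤ), a j n * e ((n : ℝ) * t)) :
    (1 / ((q : ℝ) * (d2 : ℝ))) * ∑ m ∈ Finset.Icc 1 (q * d2),
        ∫ u in ((m : ℝ) - 1)..(m : ℝ),
          ‖∑ j, (f j (u / ((q : ℝ) * (d2 : ℝ))) - f j (((m : ℝ) - 1) / ((q : ℝ) * (d2 : ℝ)))) *
              e ((b j : ℝ) * u)‖ ≤
      (2 * Real.pi * (d1 : ℝ) / ((q : ℝ) * (d2 : ℝ))) *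
        ∑ j, ∫ t in (0:ℝ)..1, ‖f j t‖ := by
  obtain rfl : f = fun j => trigPoly d1 (a j) := funext fun j => funext (hf j)
  have hslices (j : Fin J) := (sum_integral_norm_sub_le_integral_norm_deriv
    (differentiable_trigPoly d1 (a j)) (by rw [deriv_trigPoly]; exact continuous_trigPoly _ _)
    (q * d2)).trans (integral_norm_deriv_trigPoly_le d1 (a j))
  simp only [Nat.cast_mul] at hslices
  calc _ ≤ 1 / ((q : ℝ) * d2) * ∑ m ∈ Icc 1 (q * d2), ∑ j, ∫ u in ((m : ℝ) - 1)..m,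
          ‖trigPoly d1 (a j) (u / (q * d2)) - trigPoly d1 (a j) ((m - 1) / (q * d2))‖ := by
        gcongr with m hm
        exact integral_norm_sum_mul_e_le _ (fun j => by fun_prop) _ (by linarith)
    _ ≤ 1 / ((q : ℝ) * d2) * ∑ j, 2 * π * d1 * ∫ t in (0 : ℝ)..1, ‖trigPoly d1 (a j) t‖ := by
        rw [sum_comm]
        gcongr with j
        exact hslices j
    _ = _ := by rw [← mul_sum]; ring

/-- The error term `T_2` in Proposition 4.1: with `k_1 < ⋯ < k_J` the elements of `I(q;s)`,
`k_j = b_{k_j} q + s`, and each `f_{k_j}` a trigonometric polynomial of degree at most `d_1`,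
`T_2 = (1/(q d_2)) ∑_{m=1}^{q d_2} ∫_{m−1}^m |∑_j (f_{k_j}(u/(q d_2)) − f_{k_j}((m−1)/(q d_2))) e(b_{k_j} u)| du
  ≤ (2π d_1/(q d_2)) ∑_j ‖f_{k_j}‖_{L^1([0,1])}`. -/
theorem error_term_bound
    (d1 d2 q : ℕ) (hd1 : 0 < d1) (hd2 : 0 < d2) (hq : 0 < q)
    (s : ℤ) (J : ℕ) (k : Fin J → ℤ) (hk : StrictMono k)
    (b : Fin J → ℤ) (hb : ∀ j, k j = b j * (q : ℤ) + s)
    (a : Fin J → ℤ → ℂ) (f : Fin J → ℝ → ℂ)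
    (hf : ∀ j, ∀ t : ℝ,
      f j t = ∑ n ∈ Finset.Icc (-(d1 : ℤ)) (d1 : ℤ), a j n * e ((n : ℝ) * t)) :
    (1 / ((q : ℝ) * (d2 : ℝ))) * ∑ m ∈ Finset.Icc 1 (q * d2),
        ∫ u in ((m : ℝ) - 1)..(m : ℝ),
          ‖∑ j, (f j (u / ((q : ℝ) * (d2 : ℝ))) - f j (((m : ℝ) - 1) / ((q : ℝ) * (d2 : ℝ)))) *
              e ((b j : ℝ) * u)‖ ≤
      (2 * Real.pi * (d1 : ℝ) / ((q : ℝ) * (d2 : ℝ))) *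
        ∑ j, ∫ t in (0:ℝ)..1, ‖f j t‖ :=
  error_term_bound_general d1 d2 q J b a f hf
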